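/- Under the event V of the score-density lower bound proposition (with β = min{α, 1−α}/(2 f_max), ε_n < β/4, so f_{S|ϑ_n}(s) ≥ 2 f_min for |s| < β − ε_n and |q_{1−α}(S|ϑ_n)| < β/4), if m > 4/(f_min β), then: |q_{(1−α)_m}(S | ϑ_n)| ≤ β/2; f_{S|ϑ_n}(q_{(1−α)_m}(S | ϑ_n)) ≥ 2 f_min; and |q_{(1−α)_m}(S | ϑ_n) − q_{1−α}(S | ϑ_n)| ≤ 1/(f_min m). -/

import Mathlib

open MeasureTheory ProbabilityTheory Real Filter Set
open scoped RealInnerProductSpace ENNReal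

noncomputable section

/-- The lower `p`-quantile of a cdf-like function `F`: `inf {u | F u ≥ p}`. -/
def quantileOf (F : ℝ → ℝ) (p : ℝ) : ℝ := sInf {u : ℝ | p ≤ F u}

/-- The calibration quantile level `(1-α)_m = ⌈(1-α)(m+1)⌉ / m`. -/
def calLevel (α : ℝ) (m : ℕ) : ℝ := (⌈(1 - α) * ((m : ℝ) + 1)⌉₊ : ℝ) / (m : ℝ)

/-- The empirical cdf of `m` scores. -/
def empCDF {m : ℕ} (s : Fin m → ℝ) (t : ℝ) : ℝ :=
  (∑ j, if s j ≤ t then (1 : ℝ) else 0) / (m : ℝ)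

/-- The empirical `p`-quantile: the smallest of the scores at which the empirical cdf
reaches level `p` (for `p = (1-α)_m` this is the `⌈(1-α)(m+1)⌉`-th smallest score). -/
def empQuantile {m : ℕ} (s : Fin m → ℝ) (p : ℝ) : ℝ :=
  sInf {t : ℝ | t ∈ Set.range s ∧ p ≤ empCDF s t}

/-- `β = min{α, 1-α} / (2 fmax)`. -/
def betaConst (α fmax : ℝ) : ℝ := min α (1 - α) / (2 * fmax)

/-- `A = 4 λmax² fmax d / (λmin⁴ fmin²)`. -/
def Aconst (lmin lmax fmin fmax : ℝ) (d : ℕ) : ℝ :=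
  4 * lmax ^ 2 * fmax * (d : ℝ) / (lmin ^ 4 * fmin ^ 2)

/-- **Finite-sample score-quantile neighborhood under the good event** (Lemma B.9):
let the score have cdf `FS` with density `fS`, and suppose the event `V` holds, i.e.
`fS(s) ≥ 2 fmin` for all `|s| < β - ε_n` and `|q_{1-α}| ≤ ε_n < β/4`, where
`β = min{α,1-α}/(2 fmax)`. If `m > 4/(fmin β)`, then
`|q_{(1-α)_m}| ≤ β/2`, `fS(q_{(1-α)_m}) ≥ 2 fmin`, and
`|q_{(1-α)_m} - q_{1-α}| ≤ 1/(fmin m)`. -/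
theorem score_quantile_level_m_neighborhood
    (FS fS : ℝ → ℝ)
    (hfS0 : ∀ s : ℝ, 0 ≤ fS s)
    (hfSint : ∀ u : ℝ, IntegrableOn fS (Iic u))
    (hFSfS : ∀ u : ℝ, FS u = ∫ s in Iic u, fS s)
    (hFS0 : Tendsto FS atBot (nhds 0)) (hFS1 : Tendsto FS atTop (nhds 1))
    (α fmin fmax : ℝ) (hα : α ∈ Ioo (0 : ℝ) 1)
    (hfmin : 0 < fmin) (hfminmax : fmin ≤ fmax)
    (εn : ℝ) (hεβ : εn < betaConst α fmax / 4)
    (hV1 : ∀ s : ℝ, |s| < betaConst α fmax - εn → 2 * fmin ≤ fS s)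
    (hV2 : |quantileOf FS (1 - α)| ≤ εn)
    (m : ℕ) (hm : (m : ℝ) > 4 / (fmin * betaConst α fmax)) :
    |quantileOf FS (calLevel α m)| ≤ betaConst α fmax / 2 ∧
    2 * fmin ≤ fS (quantileOf FS (calLevel α m)) ∧
    |quantileOf FS (calLevel α m) - quantileOf FS (1 - α)| ≤ 1 / (fmin * (m : ℝ)) := by
  obtain ⟨hα0, hα1⟩ := hα
  have hfmax : 0 < fmax := lt_of_lt_of_le hfmin hfminmax
  set β := betaConst α fmax with hβdef
  have hβ : 0 < β := div_pos (lt_min hα0 (by linarith)) (by linarith)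
  have hε0 : 0 ≤ εn := le_trans (abs_nonneg _) hV2
  have hm0 : (0:ℝ) < m := lt_trans (div_pos (by norm_num) (mul_pos hfmin hβ)) hm
  set δ := 1 / (fmin * (m:ℝ)) with hδdef
  have hδ0 : 0 < δ := by positivity
  have hmβ : 4 < (m:ℝ) * (fmin * β) := (div_lt_iff₀ (mul_pos hfmin hβ)).mp hm
  have hδβ : δ < β / 4 := by
    rw [hδdef, div_lt_div_iff₀ (by positivity) (by norm_num)]
    nlinarith
  have hfβα : fmin * β ≤ α / 2 := by
    have h1 : fmax * β = min α (1 - α) / 2 := by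
      rw [hβdef, betaConst]; field_simp
    have h2 : min α (1 - α) ≤ α := min_le_left _ _
    nlinarith
  have hαm : 8 < α * (m:ℝ) := by nlinarith
  -- interval integrability and FS facts
  have hII : ∀ a b : ℝ, IntervalIntegrable fS volume a b := fun a b =>
    ⟨(hfSint b).mono_set Ioc_subset_Iic_self, (hfSint a).mono_set Ioc_subset_Iic_self⟩
  have hdiff : ∀ a b : ℝ, FS b - FS a = ∫ x in a..b, fS x := fun a b => by
    rw [hFSfS a, hFSfS b]
    exact intervalIntegral.integral_Iic_sub_Iic (hfSint a) (hfSint b)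
  have hcont : Continuous FS := by
    have hFSeq : FS = fun u => (∫ x in (0:ℝ)..u, fS x) + FS 0 := by
      funext u; have := hdiff 0 u; linarith
    rw [hFSeq]
    exact (intervalIntegral.continuous_primitive hII 0).add continuous_const
  have hmono : Monotone FS := by
    intro a b hab
    have h1 : FS b - FS a = ∫ x in Set.Ioc a b, fS x := by
      rw [hdiff a b, intervalIntegral.integral_of_le hab]
    have h2 : 0 ≤ ∫ x in Set.Ioc a b, fS x :=
      setIntegral_nonneg measurableSet_Ioc (fun x _ => hfS0 x)
    linarith
  -- quantile set facts
  have hne : ∀ p : ℝ, p < 1 → {u : ℝ | p ≤ FS u}.Nonempty := fun p hp1 =>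
    (hFS1.eventually (eventually_ge_nhds hp1)).exists
  have hbdd : ∀ p : ℝ, 0 < p → BddBelow {u : ℝ | p ≤ FS u} := by
    intro p hp0
    obtain ⟨u0, hu0⟩ := (hFS0.eventually (eventually_lt_nhds hp0)).exists
    refine ⟨u0, fun u hu => ?_⟩
    by_contra h
    push_neg at h
    exact absurd (le_trans hu (hmono h.le)) (not_le.mpr hu0)
  have hqmem : ∀ p : ℝ, 0 < p → p < 1 → p ≤ FS (quantileOf FS p) := fun p hp0 hp1 =>
    (isClosed_le continuous_const hcont).csInf_mem (hne p hp1) (hbdd p hp0)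
  -- level bounds
  set c : ℝ := (⌈(1 - α) * ((m:ℝ) + 1)⌉₊ : ℝ) with hcdef
  have hx0 : 0 ≤ (1 - α) * ((m:ℝ) + 1) := by nlinarith
  have hc1 : (1 - α) * ((m:ℝ) + 1) ≤ c := Nat.le_ceil _
  have hc2 : c < (1 - α) * ((m:ℝ) + 1) + 1 := Nat.ceil_lt_add_one hx0
  have hpm_eq : calLevel α m = c / (m:ℝ) := rfl
  have hpm_ge : 1 - α ≤ calLevel α m := by
    rw [hpm_eq, le_div_iff₀ hm0]; nlinarith
  have hpm_lt1 : calLevel α m < 1 := by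
    rw [hpm_eq, div_lt_one hm0]; nlinarith
  have hpm_le : calLevel α m ≤ (1 - α) + 2 * fmin * δ := by
    have hδm : 2 * fmin * δ = 2 / (m:ℝ) := by
      rw [hδdef]; field_simp
    rw [hpm_eq, hδm, div_le_iff₀ hm0]
    have h2 : 2 / (m:ℝ) * (m:ℝ) = 2 := div_mul_cancel₀ 2 hm0.ne'
    nlinarith
  have hpm0 : 0 < calLevel α m := lt_of_lt_of_le (by linarith) hpm_ge
  set q := quantileOf FS (1 - α) with hqdef
  set qm := quantileOf FS (calLevel α m) with hqmdef
  have hqabs : -εn ≤ q ∧ q ≤ εn := abs_le.mp hV2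
  have hqm1α : 1 - α ≤ FS q := hqmem (1 - α) (by linarith) (by linarith)
  -- increment bound
  have hinc : FS q + 2 * fmin * δ ≤ FS (q + δ) := by
    have hle : q ≤ q + δ := by linarith
    have h1 : FS (q + δ) - FS q = ∫ x in Set.Ioc q (q + δ), fS x := by
      rw [hdiff q (q + δ), intervalIntegral.integral_of_le hle]
    have hlow : ∀ x ∈ Set.Ioc q (q + δ), 2 * fmin ≤ fS x := by
      intro x hx
      apply hV1
      rw [abs_lt]
      constructor
      · have := hx.1; linarith [hqabs.1]
      · have := hx.2; linarith [hqabs.2]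
    have h2 : 2 * fmin * (volume (Set.Ioc q (q + δ))).toReal
        ≤ ∫ x in Set.Ioc q (q + δ), fS x :=
      setIntegral_ge_of_const_le_real measurableSet_Ioc (measure_Ioc_lt_top).ne hlow
        ((hfSint (q + δ)).mono_set Ioc_subset_Iic_self)
    have h3 : (volume (Set.Ioc q (q + δ))).toReal = δ := by
      rw [Real.volume_Ioc, ENNReal.toReal_ofReal (by linarith)]
      ring
    rw [h3] at h2
    linarith
  -- ordering of quantiles
  have hqm_le : qm ≤ q + δ := by
    apply csInf_le (hbdd _ hpm0)
    show calLevel α m ≤ FS (q + δ)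
    linarith
  have hq_le : q ≤ qm := by
    apply le_csInf (hne _ hpm_lt1)
    intro b hb
    exact csInf_le (hbdd _ (by linarith)) (le_trans hpm_ge hb)
  refine ⟨?_, ?_, ?_⟩
  · rw [abs_le]
    constructor
    · linarith [hqabs.1]
    · linarith [hqabs.2]
  · apply hV1
    rw [abs_lt]
    constructor
    · linarith [hqabs.1]
    · linarith [hqabs.2]
  · rw [abs_le]
    constructor
    · linarith
    · linarith
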